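/- arXiv:2211.15297 — 2 statements merged into one kernel-verified Lean document; each statement's English description precedes it below -/
import Mathlib

section
/- Let r > 0 and let u, v : ℝ → ℝ be twice differentiable with u(t) > 0 and (u̇(t), v̇(t)) ≠ (0,0) for all t. Then γ(t) = ψ(u(t), v(t)) is an extrinsic catenary of elliptic type (i.e., satisfies the Euler–Lagrange equations of ∫ f(u,v)‖γ̇‖ dt with f(u,v) = sinh(u/r)) if and only if its geodesic curvature κ in H²(r) satisfies κ = v̇ cosh²(u/r)/(r sinh(u/r)‖γ̇‖) for all t. -/
noncomputable section
open Real

/-- Minkowski inner product of `E₁³`. -/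
def mink3 (X Y : ℝ × ℝ × ℝ) : ℝ := -(X.1 * Y.1) + X.2.1 * Y.2.1 + X.2.2 * Y.2.2

/-- Speed `‖γ̇‖ = √(−ẋ² + ẏ² + ż²)` of a curve `(x,y,z)` in `E₁³`. -/
def speed3 (x y z : ℝ → ℝ) (t : ℝ) : ℝ :=
  Real.sqrt (-(deriv x t) ^ 2 + (deriv y t) ^ 2 + (deriv z t) ^ 2)

/-- Geodesic curvature of the curve `(x,y,z)` in `H²(r)`. -/
def kappaH2 (r : ℝ) (x y z : ℝ → ℝ) (t : ℝ) : ℝ :=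
  -(x t * (deriv (deriv y) t * deriv z t - deriv y t * deriv (deriv z) t)
      - y t * (deriv (deriv x) t * deriv z t - deriv x t * deriv (deriv z) t)
      + z t * (deriv (deriv x) t * deriv y t - deriv x t * deriv (deriv y) t))
    / (r * (speed3 x y z t) ^ 3)

/-- First component of `γ(t) = ψ(u(t), v(t))` (semi-geodesic parametrization). -/
def gX (r : ℝ) (u v : ℝ → ℝ) (t : ℝ) : ℝ :=
  r * Real.cosh (u t / r) * Real.cosh (v t / r)

/-- Second component of `γ(t) = ψ(u(t), v(t))`. -/
def gY (r : ℝ) (u v : ℝ → ℝ) (t : ℝ) : ℝ :=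
  r * Real.cosh (u t / r) * Real.sinh (v t / r)

/-- Third component of `γ(t) = ψ(u(t), v(t))`. -/
def gZ (r : ℝ) (u v : ℝ → ℝ) (t : ℝ) : ℝ :=
  r * Real.sinh (u t / r)

/-- `‖γ̇‖` in semi-geodesic coordinates: `√(u̇² + cosh²(u/r) v̇²)`. -/
def speedSG (r : ℝ) (u v : ℝ → ℝ) (t : ℝ) : ℝ :=
  Real.sqrt ((deriv u t) ^ 2 + (Real.cosh (u t / r)) ^ 2 * (deriv v t) ^ 2)

/-- Geodesic curvature of `γ(t) = ψ(u(t), v(t))` in `H²(r)`. -/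
def kappaSG (r : ℝ) (u v : ℝ → ℝ) (t : ℝ) : ℝ :=
  kappaH2 r (gX r u v) (gY r u v) (gZ r u v) t

/-- The Euler–Lagrange equations of the functional `∫ f(u,v) ‖γ̇‖ dt` in
semi-geodesic coordinates. -/
def EulerLagrange (r : ℝ) (f : ℝ → ℝ → ℝ) (u v : ℝ → ℝ) : Prop :=
  ∀ t : ℝ,
    deriv (fun a => f a (v t)) (u t) * speedSG r u v t
        + f (u t) (v t) * Real.sinh (u t / r) * Real.cosh (u t / r) * (deriv v t) ^ 2
          / (r * speedSG r u v t)
      = deriv (fun s => f (u s) (v s) * deriv u s / speedSG r u v s) t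
    ∧ deriv (fun b => f (u t) b) (v t) * speedSG r u v t
      = deriv (fun s =>
          f (u s) (v s) * deriv v s * (Real.cosh (u s / r)) ^ 2 / speedSG r u v s) t

/-!
For a weight `f(u, v) = g(u)`, differentiating in semi-geodesic coordinates shows that the two
Euler–Lagrange expressions equal `-cosh(u/r) v̇ Δ` and `cosh(u/r) u̇ Δ`, where
`Δ = g(u) κ - g'(u) cosh(u/r) v̇ / ‖γ̇‖`. Since `(u̇, v̇)` never vanishes, the Euler–Lagrange
equations say exactly `Δ = 0`, i.e. `κ = ∂ₙ log g` for a unit normal `n` of `γ`; for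
`g = sinh(·/r)`, which does not vanish where `u > 0`, this is the stated curvature identity.
-/

theorem HasDerivAt.mul_cosh_add_mul_sinh {a b θ : ℝ → ℝ} {a' b' θ' t : ℝ}
    (ha : HasDerivAt a a' t) (hb : HasDerivAt b b' t) (hθ : HasDerivAt θ θ' t) :
    HasDerivAt (fun s => a s * Real.cosh (θ s) + b s * Real.sinh (θ s))
      ((a' + b t * θ') * Real.cosh (θ t) + (b' + a t * θ') * Real.sinh (θ t)) t :=
  ((ha.mul hθ.cosh).fun_add (hb.mul hθ.sinh)).congr_deriv (by ring)

section SemiGeodesic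

variable {r : ℝ} {u v : ℝ → ℝ}

variable (r u v) in
lemma speedSG_sq (t : ℝ) :
    speedSG r u v t ^ 2 = deriv u t ^ 2 + cosh (u t / r) ^ 2 * deriv v t ^ 2 :=
  sq_sqrt (by positivity)

variable (r) in
lemma speedSG_pos {t : ℝ} (hreg : (deriv u t, deriv v t) ≠ (0, 0)) : 0 < speedSG r u v t := by
  refine sqrt_pos.2 (lt_of_le_of_ne (by positivity) fun h => hreg ?_)
  have hv : cosh (u t / r) ^ 2 * deriv v t ^ 2 = 0 := by nlinarith [sq_nonneg (deriv u t)]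
  have hu : deriv u t ^ 2 = 0 := by linarith
  rw [mul_eq_zero, or_iff_right (by positivity)] at hv
  rw [pow_eq_zero_iff two_ne_zero] at hu hv
  rw [hu, hv]

lemma hasDerivAt_speedSG (hu : Differentiable ℝ u) (hu2 : Differentiable ℝ (deriv u))
    (hv2 : Differentiable ℝ (deriv v)) {t : ℝ} (hreg : (deriv u t, deriv v t) ≠ (0, 0)) :
    HasDerivAt (speedSG r u v)
      ((deriv u t * deriv (deriv u) t
          + cosh (u t / r) * sinh (u t / r) * deriv u t * deriv v t ^ 2 / r
          + cosh (u t / r) ^ 2 * deriv v t * deriv (deriv v) t) / speedSG r u v t) t := by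
  have hw := speedSG_pos r hreg
  have hsq := ((hu2 t).hasDerivAt.fun_pow 2).fun_add
    ((((hu t).hasDerivAt.div_const r).cosh.fun_pow 2).fun_mul ((hv2 t).hasDerivAt.fun_pow 2))
  refine (hsq.sqrt (by rw [← speedSG_sq]; positivity)).congr_deriv ?_
  change _ / (2 * speedSG r u v t) = _
  field_simp
  norm_num
  ring

lemma deriv_gX (hr : r ≠ 0) (hu : Differentiable ℝ u) (hv : Differentiable ℝ v) :
    deriv (gX r u v) = fun t => sinh (u t / r) * deriv u t * cosh (v t / r)
      + cosh (u t / r) * deriv v t * sinh (v t / r) := by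
  funext t
  refine ((((hu t).hasDerivAt.div_const r).cosh.const_mul r).mul
    ((hv t).hasDerivAt.div_const r).cosh).deriv.trans ?_
  field_simp

lemma deriv_gY (hr : r ≠ 0) (hu : Differentiable ℝ u) (hv : Differentiable ℝ v) :
    deriv (gY r u v) = fun t => cosh (u t / r) * deriv v t * cosh (v t / r)
      + sinh (u t / r) * deriv u t * sinh (v t / r) := by
  funext t
  refine ((((hu t).hasDerivAt.div_const r).cosh.const_mul r).mul
    ((hv t).hasDerivAt.div_const r).sinh).deriv.trans ?_
  field_simp
  ring

lemma deriv_gZ (hr : r ≠ 0) (hu : Differentiable ℝ u) :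
    deriv (gZ r u v) = fun t => cosh (u t / r) * deriv u t := by
  funext t
  refine ((((hu t).hasDerivAt.div_const r).sinh.const_mul r)).deriv.trans ?_
  field_simp

lemma speed3_gX_gY_gZ (hr : r ≠ 0) (hu : Differentiable ℝ u) (hv : Differentiable ℝ v)
    (t : ℝ) :
    speed3 (gX r u v) (gY r u v) (gZ r u v) t = speedSG r u v t := by
  rw [speed3, speedSG, deriv_gX hr hu hv, deriv_gY hr hu hv, deriv_gZ hr hu]
  congr 1
  linear_combination
    (cosh (u t / r) ^ 2 * deriv v t ^ 2 - sinh (u t / r) ^ 2 * deriv u t ^ 2)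
      * cosh_sq_sub_sinh_sq (v t / r) + deriv u t ^ 2 * cosh_sq_sub_sinh_sq (u t / r)

lemma kappaSG_eq (hr : r ≠ 0) (hu : Differentiable ℝ u) (hu2 : Differentiable ℝ (deriv u))
    (hv : Differentiable ℝ v) (hv2 : Differentiable ℝ (deriv v)) (t : ℝ) :
    kappaSG r u v t
      = -(r * cosh (u t / r) * (deriv u t * deriv (deriv v) t - deriv (deriv u) t * deriv v t)
          + sinh (u t / r) * deriv v t * (speedSG r u v t ^ 2 + deriv u t ^ 2))
        / (r * speedSG r u v t ^ 3) := by
  have hU := (hu t).hasDerivAt.div_const r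
  have ha := hU.sinh.fun_mul (hu2 t).hasDerivAt
  have hb := hU.cosh.fun_mul (hv2 t).hasDerivAt
  have hθ := (hv t).hasDerivAt.div_const r
  rw [kappaSG, kappaH2, speed3_gX_gY_gZ hr hu hv, deriv_gX hr hu hv, deriv_gY hr hu hv,
    deriv_gZ hr hu, (ha.mul_cosh_add_mul_sinh hb hθ).deriv,
    (hb.mul_cosh_add_mul_sinh ha hθ).deriv, (hU.cosh.fun_mul (hu2 t).hasDerivAt).deriv]
  congr 2
  simp only [gX, gY, gZ]
  set C := cosh (u t / r)
  set S := sinh (u t / r)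
  set k := r * r⁻¹
  set u₁ := deriv u t
  set v₁ := deriv v t
  set ω := u₁ * deriv (deriv v) t - deriv (deriv u) t * v₁
  -- `ψ(u, v)` is the hyperbolic rotation by `v / r` of `ψ(u, 0)`; that rotation has
  -- determinant `cosh² (v / r) - sinh² (v / r) = 1`, which removes `v` from the triple product
  -- of `γ, γ̇, γ̈`.
  linear_combination
    (r * C * ω * (C ^ 2 - S ^ 2) + 2 * k * S * u₁ ^ 2 * v₁ * (C ^ 2 - S ^ 2)
        + k * S * C ^ 2 * v₁ ^ 3) * cosh_sq_sub_sinh_sq (v t / r)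
    + (r * C * ω + 2 * k * S * u₁ ^ 2 * v₁) * cosh_sq_sub_sinh_sq (u t / r)
    + (2 * S * u₁ ^ 2 * v₁ + S * C ^ 2 * v₁ ^ 3) * mul_inv_cancel₀ hr
    - S * v₁ * speedSG_sq r u v t

variable {g : ℝ → ℝ}

lemma eulerLagrange_fst_sub (hr : r ≠ 0) (hg : Differentiable ℝ g) (hu : Differentiable ℝ u)
    (hu2 : Differentiable ℝ (deriv u)) (hv : Differentiable ℝ v)
    (hv2 : Differentiable ℝ (deriv v)) {t : ℝ} (hreg : (deriv u t, deriv v t) ≠ (0, 0)) :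
    deriv g (u t) * speedSG r u v t
        + g (u t) * sinh (u t / r) * cosh (u t / r) * deriv v t ^ 2 / (r * speedSG r u v t)
        - deriv (fun s => g (u s) * deriv u s / speedSG r u v s) t
      = -(cosh (u t / r) * deriv v t * (g (u t) * kappaSG r u v t
          - deriv g (u t) * cosh (u t / r) * deriv v t / speedSG r u v t)) := by
  have hw := speedSG_pos r hreg
  have hgu : HasDerivAt (fun s => g (u s)) (deriv g (u t) * deriv u t) t :=
    (hg (u t)).hasDerivAt.comp t (hu t).hasDerivAt
  rw [((hgu.fun_mul (hu2 t).hasDerivAt).fun_div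
      (hasDerivAt_speedSG hu hu2 hv2 hreg) hw.ne').deriv, kappaSG_eq hr hu hu2 hv hv2]
  linear_combination (norm := skip)
    (deriv g (u t) * speedSG r u v t ^ 2 - g (u t) * deriv (deriv u) t) / speedSG r u v t ^ 3
      * speedSG_sq r u v t
  field_simp
  ring

lemma eulerLagrange_snd_sub (hr : r ≠ 0) (hg : Differentiable ℝ g) (hu : Differentiable ℝ u)
    (hu2 : Differentiable ℝ (deriv u)) (hv : Differentiable ℝ v)
    (hv2 : Differentiable ℝ (deriv v)) {t : ℝ} (hreg : (deriv u t, deriv v t) ≠ (0, 0)) :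
    deriv (fun _ => g (u t)) (v t) * speedSG r u v t
        - deriv (fun s => g (u s) * deriv v s * cosh (u s / r) ^ 2 / speedSG r u v s) t
      = cosh (u t / r) * deriv u t * (g (u t) * kappaSG r u v t
          - deriv g (u t) * cosh (u t / r) * deriv v t / speedSG r u v t) := by
  have hw := speedSG_pos r hreg
  have hgu : HasDerivAt (fun s => g (u s)) (deriv g (u t) * deriv u t) t :=
    (hg (u t)).hasDerivAt.comp t (hu t).hasDerivAt
  have hC := ((hu t).hasDerivAt.div_const r).cosh.fun_pow 2
  rw [deriv_const, (((hgu.fun_mul (hv2 t).hasDerivAt).fun_mul hC).fun_div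
      (hasDerivAt_speedSG hu hu2 hv2 hreg) hw.ne').deriv, kappaSG_eq hr hu hu2 hv hv2]
  linear_combination (norm := skip)
    -(g (u t) * cosh (u t / r) ^ 2 * deriv (deriv v) t
        + g (u t) * cosh (u t / r) * sinh (u t / r) * deriv u t * deriv v t / r)
      / speedSG r u v t ^ 3
      * speedSG_sq r u v t
  field_simp
  ring

theorem eulerLagrange_iff_mul_kappaSG (hr : r ≠ 0) (hg : Differentiable ℝ g)
    (hu : Differentiable ℝ u) (hu2 : Differentiable ℝ (deriv u))
    (hv : Differentiable ℝ v) (hv2 : Differentiable ℝ (deriv v))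
    (hreg : ∀ t, (deriv u t, deriv v t) ≠ (0, 0)) :
    EulerLagrange r (fun a _ => g a) u v ↔ ∀ t, g (u t) * kappaSG r u v t
      = deriv g (u t) * cosh (u t / r) * deriv v t / speedSG r u v t := by
  refine forall_congr' fun t => ?_
  rw [← sub_eq_zero (a := g (u t) * _)]
  have hC := (cosh_pos (u t / r)).ne'
  have hreg' : ¬(deriv u t = 0 ∧ deriv v t = 0) := fun h => hreg t (by rw [h.1, h.2])
  beta_reduce
  rw [← sub_eq_zero, eulerLagrange_fst_sub hr hg hu hu2 hv hv2 (hreg t),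
    ← sub_eq_zero (a := deriv (fun _ => g (u t)) (v t) * _),
    eulerLagrange_snd_sub hr hg hu hu2 hv hv2 (hreg t)]
  simp only [neg_eq_zero, mul_eq_zero, hC, false_or]
  tauto

end SemiGeodesic

/-- extrinsic catenaries of elliptic type. -/
theorem extrinsic_catenary_elliptic_iff (r : ℝ) (hr : 0 < r) (u v : ℝ → ℝ)
    (hupos : ∀ t : ℝ, 0 < u t)
    (hu : Differentiable ℝ u) (hu2 : Differentiable ℝ (deriv u))
    (hv : Differentiable ℝ v) (hv2 : Differentiable ℝ (deriv v))
    (hreg : ∀ t : ℝ, (deriv u t, deriv v t) ≠ (0, 0)) :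
    EulerLagrange r (fun a _ => Real.sinh (a / r)) u v ↔
      ∀ t : ℝ,
        kappaSG r u v t
          = deriv v t * (Real.cosh (u t / r)) ^ 2
            / (r * Real.sinh (u t / r) * speedSG r u v t) := by
  have hg : Differentiable ℝ fun a => sinh (a / r) := by fun_prop
  rw [eulerLagrange_iff_mul_kappaSG hr.ne' hg hu hu2 hv hv2 hreg]
  refine forall_congr' fun t => ?_
  have hS := (sinh_pos_iff.2 (div_pos (hupos t) hr)).ne'
  rw [((hasDerivAt_id' (u t)).div_const r).sinh.deriv]
  field_simp
end
end

section
/- Let r > 0 and let γ(t) = (x(t), y(t), z(t), 0) be a twice differentiable curve with −x² + y² + z² = −r², x > 0, and spacelike velocity. Consider the surface of revolution of hyperbolic type S_H(t,θ) = (x(t)cosh θ, y(t), z(t), x(t)sinh θ) with unit normal ξ = (1/(r‖γ̇‖))·((yż − ẏz)cosh θ, xż − ẋz, ẋy − xẏ, (yż − ẏz)sinh θ). Then the mean curvature of S_H satisfies H = [x·(x(ÿż − ẏz̈) − y(ẍż − ẋz̈) + z(ẍẏ − ẋÿ)) − (yż − ẏz)‖γ̇‖²] / (2rx‖γ̇‖³)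 for all (t,θ). -/
noncomputable section
open Real

/-- Minkowski inner product of `E₁⁴`. -/
def mink4 (X Y : ℝ × ℝ × ℝ × ℝ) : ℝ :=
  -(X.1 * Y.1) + X.2.1 * Y.2.1 + X.2.2.1 * Y.2.2.1 + X.2.2.2 * Y.2.2.2

/-- Partial derivative in the first (curve) parameter of a parametrized surface. -/
def pderivT (S : ℝ → ℝ → ℝ × ℝ × ℝ × ℝ) (t θ : ℝ) : ℝ × ℝ × ℝ × ℝ :=
  (deriv (fun s => (S s θ).1) t, deriv (fun s => (S s θ).2.1) t,
    deriv (fun s => (S s θ).2.2.1) t, deriv (fun s => (S s θ).2.2.2) t)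

/-- Partial derivative in the second (rotation) parameter of a parametrized surface. -/
def pderivTh (S : ℝ → ℝ → ℝ × ℝ × ℝ × ℝ) (t θ : ℝ) : ℝ × ℝ × ℝ × ℝ :=
  (deriv (fun p => (S t p).1) θ, deriv (fun p => (S t p).2.1) θ,
    deriv (fun p => (S t p).2.2.1) θ, deriv (fun p => (S t p).2.2.2) θ)

/-- Mean curvature of a parametrized surface `S` in `H³(r)` with respect to the unit
normal field `ξ`: `H = (g₂₂h₁₁ − 2g₁₂h₁₂ + g₁₁h₂₂)/(2(g₁₁g₂₂ − g₁₂²))`. -/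
def meanCurv (S ξ : ℝ → ℝ → ℝ × ℝ × ℝ × ℝ) (t θ : ℝ) : ℝ :=
  let g11 := mink4 (pderivT S t θ) (pderivT S t θ)
  let g12 := mink4 (pderivT S t θ) (pderivTh S t θ)
  let g22 := mink4 (pderivTh S t θ) (pderivTh S t θ)
  let h11 := mink4 (pderivT (fun a b => pderivT S a b) t θ) (ξ t θ)
  let h12 := mink4 (pderivTh (fun a b => pderivT S a b) t θ) (ξ t θ)
  let h22 := mink4 (pderivTh (fun a b => pderivTh S a b) t θ) (ξ t θ)
  (g22 * h11 - 2 * g12 * h12 + g11 * h22) / (2 * (g11 * g22 - g12 ^ 2))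

/-!
The surface is the orbit of `γ` under the hyperbolic rotations of the `(X₁, X₄)`-plane. Its
`t`-derivatives are rotated copies of `γ̇, γ̈`, its `θ`-derivatives rotate along, and the normal is a
rotated vector too; since `cosh² θ - sinh² θ = 1`, every coefficient of the fundamental forms
reduces to a Minkowski product in `E₁³`, with `g₁₂ = h₁₂ = 0`, `g₁₁ = ‖γ̇‖²` and `g₂₂ = x²`. What
remains is the rational identity `(g₂₂h₁₁ + g₁₁h₂₂)/(2g₁₁g₂₂) = H`.
-/

/-- Image of the point `(a, b, c, 0)` under the hyperbolic rotation by `θ` in the `(X₁, X₄)`-plane. -/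
def hypRot (a b c θ : ℝ) : ℝ × ℝ × ℝ × ℝ :=
  (a * cosh θ, b, c, a * sinh θ)

def hypRotDeriv (a θ : ℝ) : ℝ × ℝ × ℝ × ℝ :=
  (a * sinh θ, 0, 0, a * cosh θ)

section HyperbolicRotation

variable (a b c a' b' c' k θ : ℝ) (X Y : ℝ × ℝ × ℝ × ℝ)

lemma mink4_smul_right : mink4 X (k • Y) = k * mink4 X Y := by
  simp only [mink4, Prod.smul_fst, Prod.smul_snd, smul_eq_mul]
  ring

lemma mink4_hypRot_hypRot :
    mink4 (hypRot a b c θ) (hypRot a' b' c' θ) = -(a * a') + b * b' + c * c' := by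
  simp only [mink4, hypRot]
  linear_combination (-(a * a')) * cosh_sq' θ

lemma mink4_hypRot_hypRotDeriv : mink4 (hypRot a b c θ) (hypRotDeriv a' θ) = 0 := by
  simp only [mink4, hypRot, hypRotDeriv]
  ring

lemma mink4_hypRotDeriv_hypRot : mink4 (hypRotDeriv a θ) (hypRot a' b' c' θ) = 0 := by
  simp only [mink4, hypRot, hypRotDeriv]
  ring

lemma mink4_hypRotDeriv_hypRotDeriv : mink4 (hypRotDeriv a θ) (hypRotDeriv a' θ) = a * a' := by
  simp only [mink4, hypRotDeriv]
  linear_combination (a * a') * cosh_sq' θ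

end HyperbolicRotation

section SurfaceOfRevolution

variable (x y z : ℝ → ℝ)

lemma pderivT_hypRot :
    pderivT (fun t θ => hypRot (x t) (y t) (z t) θ)
      = fun t θ => hypRot (deriv x t) (deriv y t) (deriv z t) θ := by
  ext t θ <;> simp [pderivT, hypRot, deriv_mul_const_field]

lemma pderivTh_hypRot :
    pderivTh (fun t θ => hypRot (x t) (y t) (z t) θ) = fun t θ => hypRotDeriv (x t) θ := by
  ext t θ <;> simp [pderivTh, hypRot, hypRotDeriv]

lemma pderivTh_hypRotDeriv :
    pderivTh (fun t θ => hypRotDeriv (x t) θ) = fun t θ => hypRot (x t) 0 0 θ := by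
  ext t θ <;> simp [pderivTh, hypRot, hypRotDeriv]

lemma meanCurv_hypRot (B P R k : ℝ → ℝ) (t θ : ℝ) :
    meanCurv (fun t θ => hypRot (x t) (y t) (z t) θ)
        (fun t θ => k t • hypRot (B t) (P t) (R t) θ) t θ
      = k t * (x t ^ 2 * (-(deriv (deriv x) t * B t) + deriv (deriv y) t * P t
            + deriv (deriv z) t * R t)
          - (-deriv x t ^ 2 + deriv y t ^ 2 + deriv z t ^ 2) * (x t * B t))
        / (2 * ((-deriv x t ^ 2 + deriv y t ^ 2 + deriv z t ^ 2) * x t ^ 2)) := by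
  simp only [meanCurv, pderivT_hypRot, pderivTh_hypRot, pderivTh_hypRotDeriv, mink4_smul_right,
    mink4_hypRot_hypRot, mink4_hypRot_hypRotDeriv, mink4_hypRotDeriv_hypRot,
    mink4_hypRotDeriv_hypRotDeriv]
  ring

end SurfaceOfRevolution

theorem meanCurvature_hyperbolic_general (r : ℝ) (x y z : ℝ → ℝ)
    (hsp : ∀ t : ℝ, 0 < -(deriv x t) ^ 2 + (deriv y t) ^ 2 + (deriv z t) ^ 2) :
    ∀ t θ : ℝ,
      meanCurv (fun t θ => ((x t * Real.cosh θ, y t, z t, x t * Real.sinh θ) : ℝ × ℝ × ℝ × ℝ))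
        (fun t θ =>
          ((r * speed3 x y z t)⁻¹ •
            (((y t * deriv z t - deriv y t * z t) * Real.cosh θ,
              x t * deriv z t - deriv x t * z t,
              deriv x t * y t - x t * deriv y t,
              (y t * deriv z t - deriv y t * z t) * Real.sinh θ) : ℝ × ℝ × ℝ × ℝ))) t θ
      = (x t * (x t * (deriv (deriv y) t * deriv z t - deriv y t * deriv (deriv z) t)
            - y t * (deriv (deriv x) t * deriv z t - deriv x t * deriv (deriv z) t)
            + z t * (deriv (deriv x) t * deriv y t - deriv x t * deriv (deriv y) t))
          - (y t * deriv z t - deriv y t * z t) * (speed3 x y z t) ^ 2)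
        / (2 * r * x t * (speed3 x y z t) ^ 3) := by
  intro t θ
  have hQ := hsp t
  have hw2 : speed3 x y z t ^ 2 = -deriv x t ^ 2 + deriv y t ^ 2 + deriv z t ^ 2 :=
    Real.sq_sqrt hQ.le
  have hw : speed3 x y z t ≠ 0 := (Real.sqrt_pos.mpr hQ).ne'
  refine (meanCurv_hypRot x y z (fun t => y t * deriv z t - deriv y t * z t)
    (fun t => x t * deriv z t - deriv x t * z t) (fun t => deriv x t * y t - x t * deriv y t)
    (fun t => (r * speed3 x y z t)⁻¹) t θ).trans ?_
  rw [← hw2]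
  field_simp
  ring

/-- mean curvature of the surface of revolution of hyperbolic type. -/
theorem meanCurvature_hyperbolic (r : ℝ) (hr : 0 < r) (x y z : ℝ → ℝ)
    (hx : Differentiable ℝ x) (hx2 : Differentiable ℝ (deriv x))
    (hy : Differentiable ℝ y) (hy2 : Differentiable ℝ (deriv y))
    (hz : Differentiable ℝ z) (hz2 : Differentiable ℝ (deriv z))
    (hH2 : ∀ t : ℝ, -(x t) ^ 2 + (y t) ^ 2 + (z t) ^ 2 = -r ^ 2)
    (hx0 : ∀ t : ℝ, 0 < x t)
    (hsp : ∀ t : ℝ, 0 < -(deriv x t) ^ 2 + (deriv y t) ^ 2 + (deriv z t) ^ 2) :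
    ∀ t θ : ℝ,
      meanCurv (fun t θ => ((x t * Real.cosh θ, y t, z t, x t * Real.sinh θ) : ℝ × ℝ × ℝ × ℝ))
        (fun t θ =>
          ((r * speed3 x y z t)⁻¹ •
            (((y t * deriv z t - deriv y t * z t) * Real.cosh θ,
              x t * deriv z t - deriv x t * z t,
              deriv x t * y t - x t * deriv y t,
              (y t * deriv z t - deriv y t * z t) * Real.sinh θ) : ℝ × ℝ × ℝ × ℝ))) t θ
      = (x t * (x t * (deriv (deriv y) t * deriv z t - deriv y t * deriv (deriv z) t)
            - y t * (deriv (deriv x) t * deriv z t - deriv x t * deriv (deriv z) t)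
            + z t * (deriv (deriv x) t * deriv y t - deriv x t * deriv (deriv y) t))
          - (y t * deriv z t - deriv y t * z t) * (speed3 x y z t) ^ 2)
        / (2 * r * x t * (speed3 x y z t) ^ 3) :=
  meanCurvature_hyperbolic_general r x y z hsp
end
end
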